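/- Let N ≥ 1 and κ = 1/√2. For a ∈ ℝ and r > 0 define S(a,r) = sinh(a·r)/a if a ≠ 0 and S(0,r) = r. Then for every ς ∈ ℝ^N with ς₁² + ⋯ + ς_N² = 1 and every r > 0, writing κ_ij = (ς_i − ς_j)/2, one has ∏_{1 ≤ i < j ≤ N} S(κ_ij, r) ≤ (sinh(κ·r)/κ)^{N(N−1)/2}. -/

import Mathlib

/-!
Each factor `S(κᵢⱼ, r)` is even in `κᵢⱼ` and, for `r ≥ 0`, nondecreasing in `|κᵢⱼ|`: since `sinh`
is convex on `[0, ∞)` and vanishes at `0`, its secant slope `sinh x / x` increases. On the unit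
sphere `(ςᵢ - ςⱼ)² ≤ 2 (ςᵢ² + ςⱼ²) ≤ 2`, i.e. `|κᵢⱼ| ≤ 1/√2 = κ`, so each of the `N(N-1)/2`
factors is at most `sinh(κ r)/κ`.
-/

/-- `S a r = sinh (a r) / a`, extended by continuity to `S 0 r = r`. -/
noncomputable def Ssinh (a r : ℝ) : ℝ := if a = 0 then r else Real.sinh (a * r) / a

open Real Finset

theorem convexOn_sinh_Ici : ConvexOn ℝ (Set.Ici 0) sinh := by
  refine MonotoneOn.convexOn_of_deriv (convex_Ici 0) continuous_sinh.continuousOn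
    differentiable_sinh.differentiableOn ?_
  rw [Real.deriv_sinh, interior_Ici]
  intro x hx y hy hxy
  rw [cosh_le_cosh, abs_of_pos hx, abs_of_pos hy]
  exact hxy

theorem sinh_div_self_le_sinh_div_self {x y : ℝ} (hx : 0 < x) (hxy : x ≤ y) :
    sinh x / x ≤ sinh y / y := by
  simpa using convexOn_sinh_Ici.secant_mono Set.self_mem_Ici hx.le (hx.trans_le hxy).le
    hx.ne' (hx.trans_le hxy).ne' hxy

theorem Ssinh_of_ne_zero {a : ℝ} (ha : a ≠ 0) (r : ℝ) : Ssinh a r = sinh (a * r) / a :=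
  if_neg ha

theorem Ssinh_zero_left (r : ℝ) : Ssinh 0 r = r := if_pos rfl

theorem Ssinh_zero_right (a : ℝ) : Ssinh a 0 = 0 := by
  unfold Ssinh; split_ifs <;> simp

theorem Ssinh_neg (a r : ℝ) : Ssinh (-a) r = Ssinh a r := by
  rcases eq_or_ne a 0 with rfl | ha
  · simp
  · rw [Ssinh_of_ne_zero (neg_ne_zero.2 ha), Ssinh_of_ne_zero ha, neg_mul, sinh_neg,
      neg_div_neg_eq]

theorem Ssinh_abs (a r : ℝ) : Ssinh |a| r = Ssinh a r := by
  rcases abs_choice a with h | h <;> rw [h]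
  exact Ssinh_neg a r

theorem Ssinh_nonneg (a : ℝ) {r : ℝ} (hr : 0 ≤ r) : 0 ≤ Ssinh a r := by
  rw [← Ssinh_abs]
  rcases (abs_nonneg a).eq_or_lt with h | h
  · rwa [← h, Ssinh_zero_left]
  · rw [Ssinh_of_ne_zero h.ne']
    exact div_nonneg (sinh_nonneg_iff.2 (mul_nonneg h.le hr)) h.le

theorem Ssinh_le_Ssinh {a b r : ℝ} (hr : 0 ≤ r) (hab : |a| ≤ b) : Ssinh a r ≤ Ssinh b r := by
  rcases hr.eq_or_lt with rfl | hr
  · rw [Ssinh_zero_right, Ssinh_zero_right]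
  rw [← Ssinh_abs]
  rcases (abs_nonneg a).eq_or_lt with ha | ha
  · rcases (ha.trans_le hab).eq_or_lt with hb | hb
    · rw [← ha, ← hb]
    rw [← ha, Ssinh_zero_left, Ssinh_of_ne_zero hb.ne', le_div_iff₀ hb, mul_comm]
    exact self_le_sinh_iff.2 (mul_pos hb hr).le
  · have hb := ha.trans_le hab
    have key := sinh_div_self_le_sinh_div_self (mul_pos ha hr)
      (mul_le_mul_of_nonneg_right hab hr.le)
    rw [div_mul_eq_div_div, div_mul_eq_div_div, div_le_div_iff_of_pos_right hr] at key
    rwa [Ssinh_of_ne_zero ha.ne', Ssinh_of_ne_zero hb.ne']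

theorem sq_sub_le_two_mul_sum_sq {ι : Type*} [Fintype ι] (f : ι → ℝ) {i j : ι} (hij : i ≠ j) :
    (f i - f j) ^ 2 ≤ 2 * ∑ k, f k ^ 2 := by
  have hpair : f i ^ 2 + f j ^ 2 ≤ ∑ k, f k ^ 2 := by
    classical
    rw [← sum_pair (f := fun k => f k ^ 2) hij]
    exact sum_le_univ_sum_of_nonneg fun k => sq_nonneg (f k)
  nlinarith [sq_nonneg (f i + f j)]

theorem abs_half_sub_le_of_sum_sq_eq_one {ι : Type*} [Fintype ι] {f : ι → ℝ}
    (hf : ∑ k, f k ^ 2 = 1) {i j : ι} (hij : i ≠ j) : |(f i - f j) / 2| ≤ 1 / √2 := by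
  rw [one_div, ← sqrt_inv]
  apply abs_le_sqrt
  have := sq_sub_le_two_mul_sum_sq f hij
  rw [hf] at this
  rw [div_pow]; linarith

theorem card_filter_fst_lt_snd (α : Type*) [Fintype α] [LinearOrder α] :
    #(univ.filter fun q : α × α => q.1 < q.2) = (Fintype.card α).choose 2 := by
  simpa using card_product_filter_lt (s := (univ : Finset α))

theorem sharp_volume_comparison_spd_general {N : ℕ}
    (ς : Fin N → ℝ) (hς : ∑ i, ς i ^ 2 = 1) (r : ℝ) (hr : 0 < r) :
    (∏ q ∈ Finset.univ.filter (fun q : Fin N × Fin N => q.1 < q.2),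
        Ssinh ((ς q.1 - ς q.2) / 2) r)
      ≤ (Real.sinh ((1 / Real.sqrt 2) * r) / (1 / Real.sqrt 2)) ^ (N * (N - 1) / 2) := by
  calc (∏ q ∈ univ.filter (fun q : Fin N × Fin N => q.1 < q.2), Ssinh ((ς q.1 - ς q.2) / 2) r)
      ≤ ∏ _q ∈ univ.filter (fun q : Fin N × Fin N => q.1 < q.2), Ssinh (1 / √2) r := by
        refine prod_le_prod (fun q _ => Ssinh_nonneg _ hr.le) fun q hq => ?_
        exact Ssinh_le_Ssinh hr.le
          (abs_half_sub_le_of_sum_sq_eq_one hς (mem_filter.1 hq).2.ne)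
    _ = _ := by
        rw [prod_const, card_filter_fst_lt_snd, Fintype.card_fin, Nat.choose_two_right,
          Ssinh_of_ne_zero (by positivity)]

/-- The sharper volume comparison inequality used by the `sharp CURS' algorithm:
the product over pairs `i < j` alone is bounded by `(sinh(κ r)/κ)^{N(N-1)/2}`
with `κ = 1/√2`. -/
theorem sharp_volume_comparison_spd {N : ℕ} (hN : 1 ≤ N)
    (ς : Fin N → ℝ) (hς : ∑ i, ς i ^ 2 = 1) (r : ℝ) (hr : 0 < r) :
    (∏ q ∈ Finset.univ.filter (fun q : Fin N × Fin N => q.1 < q.2),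
        Ssinh ((ς q.1 - ς q.2) / 2) r)
      ≤ (Real.sinh ((1 / Real.sqrt 2) * r) / (1 / Real.sqrt 2)) ^ (N * (N - 1) / 2) :=
  sharp_volume_comparison_spd_general ς hς r hr
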